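/- arXiv:1110.2347 — 2 statements merged into one kernel-verified Lean document; each statement's English description precedes it below -/
import Mathlib

section
/- Let (O,⋆) be a graded pre-Lie system, i.e. a (Z,N)-bigraded R-module with composition maps ⋆_k: O^n_i ⊗ O^m_j → O^{n+m−1}_{i+j} for 1 ≤ k ≤ n satisfying f⋆_u(g⋆_v h) = (f⋆_u g)⋆_{v+u−1} h and (f⋆_u g)⋆_{v+m−1} h = (−1)^{jl}(f⋆_v h)⋆_u g for u < v (where g ∈ O^m_j, h ∈ O^p_l). Then the maps f ∘_k g := (−1)^{(j+m−1)(n−1)+(m−1)(k−1)} f ⋆_k g form a weight graded pre-Lie system, i.e. they satisfy f∘_u(g∘_v h) = (f∘_u g)∘_{v+u−1} h and (f∘_u g)∘_{v+m−1} h = (−1)^{(j+m−1)(l+p−1)}(f∘_v h)∘_u g for u < v. -/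
/-!
The sign twist `f ∘ₖ g = cS n m j k • f ⋆ₖ g` is applied to both sides of each relation of the
graded pre-Lie system. Since the compositions are bilinear, the signs come out as scalars, so each
relation for `∘` is the corresponding relation for `⋆` times an identity between signs. These
identities hold because the exponents agree: exactly in the sequential case, and up to
`2 (j - j p)` in the parallel case.
-/

noncomputable section

/-- The sign `(-1)^e` for an integer exponent `e`. -/
def pm (e : ℤ) : ℤ := ((Int.negOnePow e : ℤˣ) : ℤ)

/-- The sign `(-1)^{(j+m-1)(n-1)+(m-1)(k-1)}` turning the graded composition `⋆ₖ`
(for `f` of arity `n` and `g` of arity `m`, degree `j`) into the weight graded one. -/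
def cS (n m : ℕ) (j : ℤ) (k : ℕ) : ℤ :=
  pm ((j + (m : ℤ) - 1) * ((n : ℤ) - 1) + ((m : ℤ) - 1) * ((k : ℤ) - 1))

lemma pm_add (a b : ℤ) : pm (a + b) = pm a * pm b := by
  simp only [pm, Int.negOnePow_add, Units.val_mul]

lemma pm_eq_pm_of_even_sub {a b : ℤ} (h : Even (a - b)) : pm a = pm b := by
  rw [pm, pm, (Int.negOnePow_eq_iff a b).mpr h]

lemma cS_sequential {n m p u v : ℕ} (j l : ℤ) (hu : 1 ≤ u) (hm : 1 ≤ m) :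
    cS n (m + p - 1) (j + l) u * cS m p l v = cS (n + m - 1) p l (v + u - 1) * cS n m j u := by
  simp only [cS, ← pm_add]
  rw [Nat.cast_sub (by omega), Nat.cast_sub (by omega), Nat.cast_sub (by omega)]
  push_cast
  congr 1
  ring

lemma cS_parallel {n m p u v : ℕ} (j l : ℤ) (hn : 1 ≤ n) (hv : 1 ≤ v) :
    cS (n + m - 1) p l (v + m - 1) * (cS n m j u * pm (j * l))
      = pm ((j + m - 1) * (l + p - 1)) * (cS (n + p - 1) m j u * cS n p l v) := by
  simp only [cS, ← pm_add]
  rw [Nat.cast_sub (by omega), Nat.cast_sub (by omega), Nat.cast_sub (by omega)]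
  push_cast
  exact pm_eq_pm_of_even_sub ⟨j - j * p, by ring⟩

theorem gradedPreLieSystem_to_weightGraded_general
    {R M : Type*} [CommRing R] [AddCommGroup M] [Module R M]
    (H : ℕ → ℤ → Submodule R M)
    (comp : ℕ → M →ₗ[R] M →ₗ[R] M)
    (hax1 : ∀ (n m p : ℕ) (i j l : ℤ) (u v : ℕ), 1 ≤ u → u ≤ n → 1 ≤ v → v ≤ m →
      ∀ f ∈ H n i, ∀ g ∈ H m j, ∀ h ∈ H p l,
        comp u f (comp v g h) = comp (v + u - 1) (comp u f g) h)
    (hax2 : ∀ (n m p : ℕ) (i j l : ℤ) (u v : ℕ), 1 ≤ u → u < v → v ≤ n →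
      ∀ f ∈ H n i, ∀ g ∈ H m j, ∀ h ∈ H p l,
        comp (v + m - 1) (comp u f g) h = pm (j * l) • comp u (comp v f h) g) :
    (∀ (n m p : ℕ) (i j l : ℤ) (u v : ℕ), 1 ≤ u → u ≤ n → 1 ≤ v → v ≤ m →
      ∀ f ∈ H n i, ∀ g ∈ H m j, ∀ h ∈ H p l,
        cS n (m + p - 1) (j + l) u • comp u f (cS m p l v • comp v g h)
          = cS (n + m - 1) p l (v + u - 1) •
              comp (v + u - 1) (cS n m j u • comp u f g) h) ∧
    (∀ (n m p : ℕ) (i j l : ℤ) (u v : ℕ), 1 ≤ u → u < v → v ≤ n →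
      ∀ f ∈ H n i, ∀ g ∈ H m j, ∀ h ∈ H p l,
        cS (n + m - 1) p l (v + m - 1) • comp (v + m - 1) (cS n m j u • comp u f g) h
          = pm ((j + (m : ℤ) - 1) * (l + (p : ℤ) - 1)) •
              (cS (n + p - 1) m j u • comp u (cS n p l v • comp v f h) g)) := by
  constructor
  · intro n m p i j l u v hu hun hv hvm f hf g hg h hh
    simp only [map_zsmul, LinearMap.smul_apply, smul_smul,
      hax1 n m p i j l u v hu hun hv hvm f hf g hg h hh]
    rw [cS_sequential j l hu (hv.trans hvm)]
  · intro n m p i j l u v hu huv hvn f hf g hg h hh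
    simp only [map_zsmul, LinearMap.smul_apply, smul_smul,
      hax2 n m p i j l u v hu huv hvn f hf g hg h hh]
    rw [cS_parallel j l (hu.trans (huv.le.trans hvn)) (hu.trans huv.le)]

/-- If `(O,⋆)` is a graded pre-Lie system (a `(ℤ,ℕ)`-bigraded `R`-module with bilinear
compositions `⋆ₖ : Oⁿᵢ ⊗ Oᵐⱼ → O^{n+m-1}_{i+j}`, `1 ≤ k ≤ n`, satisfying the two pre-Lie
system relations with signs given by degrees), then the maps
`f ∘ₖ g := (-1)^{(j+m-1)(n-1)+(m-1)(k-1)} f ⋆ₖ g` form a weight graded pre-Lie system,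
i.e. satisfy the two relations with signs given by weights. -/
theorem gradedPreLieSystem_to_weightGraded
    {R M : Type*} [CommRing R] [AddCommGroup M] [Module R M]
    (H : ℕ → ℤ → Submodule R M)
    (hdec : DirectSum.IsInternal fun p : ℕ × ℤ => H p.1 p.2)
    (comp : ℕ → M →ₗ[R] M →ₗ[R] M)
    (hgr : ∀ (n m : ℕ) (i j : ℤ) (k : ℕ), 1 ≤ k → k ≤ n →
      ∀ f ∈ H n i, ∀ g ∈ H m j, comp k f g ∈ H (n + m - 1) (i + j))
    (hax1 : ∀ (n m p : ℕ) (i j l : ℤ) (u v : ℕ), 1 ≤ u → u ≤ n → 1 ≤ v → v ≤ m →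
      ∀ f ∈ H n i, ∀ g ∈ H m j, ∀ h ∈ H p l,
        comp u f (comp v g h) = comp (v + u - 1) (comp u f g) h)
    (hax2 : ∀ (n m p : ℕ) (i j l : ℤ) (u v : ℕ), 1 ≤ u → u < v → v ≤ n →
      ∀ f ∈ H n i, ∀ g ∈ H m j, ∀ h ∈ H p l,
        comp (v + m - 1) (comp u f g) h = pm (j * l) • comp u (comp v f h) g) :
    (∀ (n m p : ℕ) (i j l : ℤ) (u v : ℕ), 1 ≤ u → u ≤ n → 1 ≤ v → v ≤ m →
      ∀ f ∈ H n i, ∀ g ∈ H m j, ∀ h ∈ H p l,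
        cS n (m + p - 1) (j + l) u • comp u f (cS m p l v • comp v g h)
          = cS (n + m - 1) p l (v + u - 1) •
              comp (v + u - 1) (cS n m j u • comp u f g) h) ∧
    (∀ (n m p : ℕ) (i j l : ℤ) (u v : ℕ), 1 ≤ u → u < v → v ≤ n →
      ∀ f ∈ H n i, ∀ g ∈ H m j, ∀ h ∈ H p l,
        cS (n + m - 1) p l (v + m - 1) • comp (v + m - 1) (cS n m j u • comp u f g) h
          = pm ((j + (m : ℤ) - 1) * (l + (p : ℤ) - 1)) •
              (cS (n + p - 1) m j u • comp u (cS n p l v • comp v f h) g)) :=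
  gradedPreLieSystem_to_weightGraded_general H comp hax1 hax2
end
end

section
/- Let (O,∘) be a weight graded pre-Lie system with total product f∘g = Σ_k f∘_k g as in Corollary of the construction, and let g ∈ O have odd weight. Then for every f ∈ O one has (f∘g)∘g = f∘(g∘g), without any assumption on 2-torsion of the underlying R-modules. -/
noncomputable section

/-- The total product `f ∘ g = ∑_{k=1}^{n} f ∘ₖ g` associated to a family of partial
compositions, for `f` of arity `n`. -/
def tcirc {R M : Type*} [CommRing R] [AddCommGroup M] [Module R M]
    (comp : ℕ → M →ₗ[R] M →ₗ[R] M) (n : ℕ) (f g : M) : M :=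
  ∑ k ∈ Finset.Icc 1 n, comp k f g

/-!
Expanding both sides with the two pre-Lie axioms, `(f∘g)∘h - f∘(g∘h)` is the sum of the terms
`(f∘ᵤg)∘ₖh` with `k < u` plus `ε` times the sum of the terms `(f∘ᵥh)∘ᵤg` with `u < v`, where
`ε` is the Koszul sign of the second axiom. For `h = g` of odd weight, `ε = -1` and the two sums
are literally the same sum, so they cancel term by term: no division by `2` is ever needed.
-/

open Finset

lemma pm_mul_self_of_odd {e : ℤ} (he : Odd e) : pm (e * e) = -1 := by
  simp [pm, Int.negOnePow_odd _ (he.mul he)]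

lemma sum_Ioc_add_sub_one {M : Type*} [AddCommMonoid M] (T : ℕ → M) {a c : ℕ} (b : ℕ)
    (h : 1 ≤ a + c) :
    ∑ v ∈ Ioc a b, T (v + c - 1) = ∑ k ∈ Ioc (a + c - 1) (b + c - 1), T k := by
  refine sum_nbij' (· + c - 1) (· + 1 - c) (fun v hv => ?_) (fun k hk => ?_)
    (fun v hv => ?_) (fun k hk => ?_) (fun _ _ => rfl)
  all_goals simp only [mem_Ioc] at *; omega

lemma sum_Icc_one_split {M : Type*} [AddCommMonoid M] (T : ℕ → M) {n u : ℕ} (m : ℕ)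
    (hu : 1 ≤ u) (hun : u ≤ n) :
    ∑ k ∈ Icc 1 (n + m - 1), T k
      = ∑ k ∈ Ico 1 u, T k + ∑ v ∈ Icc 1 m, T (v + u - 1) + ∑ v ∈ Ioc u n, T (v + m - 1) := by
  have hIcc : ∀ N, Icc 1 N = Ioc 0 N := Icc_add_one_left_eq_Ioc 0
  have hIco : Ico 1 u = Ioc 0 (u - 1) := by ext; simp only [mem_Ico, mem_Ioc]; omega
  rw [hIcc, hIcc, hIco, sum_Ioc_add_sub_one T m (by omega), sum_Ioc_add_sub_one T n (by omega),
    Nat.zero_add, Nat.add_comm m u, sum_Ioc_consecutive _ (Nat.zero_le _) (by omega),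
    sum_Ioc_consecutive _ (Nat.zero_le _) (by omega)]

section PartialCompositions

variable {R M : Type*} [CommRing R] [AddCommGroup M] [Module R M]
  (comp : ℕ → M →ₗ[R] M →ₗ[R] M)

lemma tcirc_sum_left {ι : Type*} (s : Finset ι) (N : ℕ) (x : ι → M) (h : M) :
    tcirc comp N (∑ u ∈ s, x u) h = ∑ u ∈ s, tcirc comp N (x u) h := by
  simp only [tcirc, map_sum, LinearMap.sum_apply]
  exact sum_comm

lemma tcirc_tcirc_eq_add {n m : ℕ} {f g h : M} (ε : ℤ)
    (hseq : ∀ u v, 1 ≤ u → u ≤ n → 1 ≤ v → v ≤ m →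
      comp u f (comp v g h) = comp (v + u - 1) (comp u f g) h)
    (hpar : ∀ u v, 1 ≤ u → u < v → v ≤ n →
      comp (v + m - 1) (comp u f g) h = ε • comp u (comp v f h) g) :
    tcirc comp (n + m - 1) (tcirc comp n f g) h
      = tcirc comp n f (tcirc comp m g h)
        + ∑ u ∈ Icc 1 n, ∑ k ∈ Ico 1 u, comp k (comp u f g) h
        + ε • ∑ u ∈ Icc 1 n, ∑ v ∈ Ioc u n, comp u (comp v f h) g := by
  have hslot : ∀ u ∈ Icc 1 n, tcirc comp (n + m - 1) (comp u f g) h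
      = comp u f (tcirc comp m g h) + ∑ k ∈ Ico 1 u, comp k (comp u f g) h
        + ε • ∑ v ∈ Ioc u n, comp u (comp v f h) g := by
    intro u hu
    obtain ⟨hu1, hun⟩ := mem_Icc.mp hu
    rw [tcirc, sum_Icc_one_split _ m hu1 hun, tcirc, map_sum, smul_sum,
      sum_congr rfl fun v hv => (hseq u v hu1 hun (mem_Icc.mp hv).1 (mem_Icc.mp hv).2).symm,
      sum_congr rfl fun v hv =>
        hpar u v hu1 (mem_Ioc.mp hv).1 (mem_Ioc.mp hv).2]
    abel
  rw [tcirc.eq_1 comp n f g, tcirc_sum_left, sum_congr rfl hslot, sum_add_distrib,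
    sum_add_distrib, ← smul_sum, tcirc.eq_1 comp n f]

end PartialCompositions

theorem weightGradedPreLieSystem_odd_square_general
    {R M : Type*} [CommRing R] [AddCommGroup M] [Module R M]
    (H : ℕ → ℤ → Submodule R M)
    (comp : ℕ → M →ₗ[R] M →ₗ[R] M)
    (hax1 : ∀ (n m p : ℕ) (i j l : ℤ) (u v : ℕ), 1 ≤ u → u ≤ n → 1 ≤ v → v ≤ m →
      ∀ f ∈ H n i, ∀ g ∈ H m j, ∀ h ∈ H p l,
        comp u f (comp v g h) = comp (v + u - 1) (comp u f g) h)
    (hax2 : ∀ (n m p : ℕ) (i j l : ℤ) (u v : ℕ), 1 ≤ u → u < v → v ≤ n →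
      ∀ f ∈ H n i, ∀ g ∈ H m j, ∀ h ∈ H p l,
        comp (v + m - 1) (comp u f g) h
          = pm ((j + (m : ℤ) - 1) * (l + (p : ℤ) - 1)) • comp u (comp v f h) g) :
    ∀ (n m : ℕ) (i j : ℤ), Odd (j + (m : ℤ) - 1) →
      ∀ f ∈ H n i, ∀ g ∈ H m j,
        tcirc comp (n + m - 1) (tcirc comp n f g) g
          = tcirc comp n f (tcirc comp m g g) := by
  intro n m i j hodd f hf g hg
  rw [tcirc_tcirc_eq_add comp _
      (fun u v hu hun hv hvm => hax1 n m m i j j u v hu hun hv hvm f hf g hg g hg)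
      (fun u v hu huv hvn => hax2 n m m i j j u v hu huv hvn f hf g hg g hg),
    pm_mul_self_of_odd hodd, neg_one_smul]
  have hswap : ∑ u ∈ Icc 1 n, ∑ k ∈ Ico 1 u, comp k (comp u f g) g
      = ∑ u ∈ Icc 1 n, ∑ v ∈ Ioc u n, comp u (comp v f g) g :=
    sum_comm' fun u k => by simp only [mem_Icc, mem_Ico, mem_Ioc]; omega
  rw [hswap, add_neg_cancel_right]

/-- In a weight graded pre-Lie system `(O,∘)` over an arbitrary commutative ring `R` (no
assumption on 2-torsion), if `g` has odd weight then `(f∘g)∘g = f∘(g∘g)` for every `f`,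
where `∘` is the total composition `f ∘ g = ∑_k f ∘ₖ g`. -/
theorem weightGradedPreLieSystem_odd_square
    {R M : Type*} [CommRing R] [AddCommGroup M] [Module R M]
    (H : ℕ → ℤ → Submodule R M)
    (hdec : DirectSum.IsInternal fun p : ℕ × ℤ => H p.1 p.2)
    (comp : ℕ → M →ₗ[R] M →ₗ[R] M)
    (hgr : ∀ (n m : ℕ) (i j : ℤ) (k : ℕ), 1 ≤ k → k ≤ n →
      ∀ f ∈ H n i, ∀ g ∈ H m j, comp k f g ∈ H (n + m - 1) (i + j))
    (hax1 : ∀ (n m p : ℕ) (i j l : ℤ) (u v : ℕ), 1 ≤ u → u ≤ n → 1 ≤ v → v ≤ m →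
      ∀ f ∈ H n i, ∀ g ∈ H m j, ∀ h ∈ H p l,
        comp u f (comp v g h) = comp (v + u - 1) (comp u f g) h)
    (hax2 : ∀ (n m p : ℕ) (i j l : ℤ) (u v : ℕ), 1 ≤ u → u < v → v ≤ n →
      ∀ f ∈ H n i, ∀ g ∈ H m j, ∀ h ∈ H p l,
        comp (v + m - 1) (comp u f g) h
          = pm ((j + (m : ℤ) - 1) * (l + (p : ℤ) - 1)) • comp u (comp v f h) g) :
    ∀ (n m : ℕ) (i j : ℤ), Odd (j + (m : ℤ) - 1) →
      ∀ f ∈ H n i, ∀ g ∈ H m j,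
        tcirc comp (n + m - 1) (tcirc comp n f g) g
          = tcirc comp n f (tcirc comp m g g) :=
  weightGradedPreLieSystem_odd_square_general H comp hax1 hax2
end
end
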